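/- arXiv:2103.03235 — 3 statements merged into one kernel-verified Lean document; each statement's English description precedes it below -/
import Mathlib

section
/- Let Z be an n×K binary membership matrix (each row has exactly one entry equal to 1), with each column containing at least n_min ones, and let Π be a symmetric K×K real matrix. Then the K-th largest singular value of Z Π Z^T is at least n_min times the K-th largest singular value of Π. -/
open scoped Classical

/-- The `k`-th largest singular value of a real matrix, via the Courant–Fischer
min-max characterization: supremum over `k`-dimensional subspaces `V` of the
infimum of `‖M x‖` over unit vectors `x ∈ V`. -/
noncomputable def sval {m n : ℕ} (M : Matrix (Fin m) (Fin n) ℝ) (k : ℕ) : ℝ :=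
  ⨆ V : {V : Submodule ℝ (EuclideanSpace ℝ (Fin n)) // Module.finrank ℝ V = k},
    ⨅ x : {x : EuclideanSpace ℝ (Fin n) // x ∈ V.1 ∧ ‖x‖ = 1},
      ‖Matrix.toEuclideanLin M x.1‖

/-- `Z` is a 0/1 membership matrix: each row has exactly one entry equal to 1. -/
def IsMembership {n K : ℕ} (Z : Matrix (Fin n) (Fin K) ℝ) : Prop :=
  (∀ i k, Z i k = 0 ∨ Z i k = 1) ∧ ∀ i, ∃! k, Z i k = 1

/-- Size of community `k`: number of ones in column `k` of `Z`. -/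
noncomputable def commCard {n K : ℕ} (Z : Matrix (Fin n) (Fin K) ℝ) (k : Fin K) : ℕ :=
  (Finset.univ.filter fun i => Z i k = 1).card

/-!
Let `n_k ≥ n_min` be the size of community `k`, so that `ZᵀZ = diag(n_k)`. Then
`‖Z w‖ ≥ √n_min ‖w‖` for every `w` and `‖Zᵀ(Z c)‖ ≥ √n_min ‖Z c‖` for every `c`, while
`‖Π y‖ ≥ λ_K(Π) ‖y‖` by the min-max characterisation at full dimension. Writing
`Z Π Zᵀ (Z c) = Z (Π (Zᵀ (Z c)))` and chaining the three bounds gives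
`‖Z Π Zᵀ x‖ ≥ n_min λ_K(Π) ‖x‖` on the range of `Z`. That range is `K`-dimensional because no
community is empty, so it is admissible in the min-max characterisation of `λ_K(Z Π Zᵀ)`.
-/

open Finset Matrix Module

section Sval

variable {m n : ℕ}

lemma sval_nonneg (M : Matrix (Fin m) (Fin n) ℝ) (k : ℕ) : 0 ≤ sval M k :=
  Real.iSup_nonneg fun _ => Real.iInf_nonneg fun _ => norm_nonneg _

lemma sval_zero_right (M : Matrix (Fin m) (Fin n) ℝ) : sval M 0 = 0 := by
  refine le_antisymm (Real.iSup_le (fun V => ?_) le_rfl) (sval_nonneg M 0)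
  have : IsEmpty {x : EuclideanSpace ℝ (Fin n) // x ∈ V.1 ∧ ‖x‖ = 1} := by
    refine ⟨fun x => ?_⟩
    have hx : x.1 = 0 := (Submodule.mem_bot ℝ).mp (Submodule.finrank_eq_zero.mp V.2 ▸ x.2.1)
    simpa [hx] using x.2.2
  rw [Real.iInf_of_isEmpty]

lemma sval_le_norm_of_norm_eq_one (M : Matrix (Fin m) (Fin n) ℝ) {x : EuclideanSpace ℝ (Fin n)}
    (hx : ‖x‖ = 1) : sval M n ≤ ‖toEuclideanLin M x‖ := by
  refine Real.iSup_le (fun V => ?_) (norm_nonneg _)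
  refine ciInf_le ⟨0, ?_⟩ (⟨x, ?_, hx⟩ : {y // y ∈ V.1 ∧ ‖y‖ = 1})
  · rintro _ ⟨y, rfl⟩
    exact norm_nonneg _
  · rw [Submodule.eq_top_of_finrank_eq (V.2.trans (finrank_euclideanSpace_fin).symm)]
    trivial

lemma sval_mul_norm_le (M : Matrix (Fin m) (Fin n) ℝ) (x : EuclideanSpace ℝ (Fin n)) :
    sval M n * ‖x‖ ≤ ‖toEuclideanLin M x‖ := by
  rcases eq_or_ne x 0 with rfl | hx
  · simp
  have hx' : ‖x‖ ≠ 0 := norm_ne_zero_iff.mpr hx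
  calc sval M n * ‖x‖ ≤ ‖toEuclideanLin M ((‖x‖⁻¹ : ℝ) • x)‖ * ‖x‖ := by
        gcongr
        exact sval_le_norm_of_norm_eq_one M (norm_smul_inv_norm hx)
    _ = ‖toEuclideanLin M x‖ := by
        rw [map_smul, norm_smul, norm_inv, norm_norm]
        field_simp

lemma iInf_norm_apply_le_opNorm {E F : Type*} [NormedAddCommGroup E] [NormedSpace ℝ E]
    [NormedAddCommGroup F] [NormedSpace ℝ F] (T : E →L[ℝ] F) (s : Set E) :
    ⨅ x : {x : E // x ∈ s ∧ ‖x‖ = 1}, ‖T x‖ ≤ ‖T‖ := by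
  rcases isEmpty_or_nonempty {x : E // x ∈ s ∧ ‖x‖ = 1} with h | ⟨⟨x, hxs, hx⟩⟩
  · rw [Real.iInf_of_isEmpty]
    exact norm_nonneg T
  · refine ciInf_le_of_le ⟨0, ?_⟩ ⟨x, hxs, hx⟩ ?_
    · rintro _ ⟨y, rfl⟩
      exact norm_nonneg _
    · simpa [hx] using T.le_opNorm x

lemma le_sval_of_forall_mul_norm_le (M : Matrix (Fin m) (Fin n) ℝ)
    {V : Submodule ℝ (EuclideanSpace ℝ (Fin n))} {k : ℕ} (hV : finrank ℝ V = k) (hk : 0 < k)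
    {c : ℝ} (h : ∀ x ∈ V, c * ‖x‖ ≤ ‖toEuclideanLin M x‖) : c ≤ sval M k := by
  obtain ⟨x, hx⟩ : ∃ x : V, x ≠ 0 := finrank_pos_iff_exists_ne_zero.mp (hV ▸ hk)
  have : Nonempty {x : EuclideanSpace ℝ (Fin n) // x ∈ V ∧ ‖x‖ = 1} :=
    ⟨⟨(‖x‖⁻¹ : ℝ) • (x : EuclideanSpace ℝ (Fin n)), V.smul_mem _ x.2,
      by simpa using norm_smul_inv_norm (𝕜 := ℝ) hx⟩⟩
  let T := LinearMap.toContinuousLinearMap (toEuclideanLin M)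
  refine le_ciSup_of_le ⟨‖T‖, ?_⟩ ⟨V, hV⟩ (le_ciInf fun x => ?_)
  · rintro _ ⟨W, rfl⟩
    exact iInf_norm_apply_le_opNorm T W.1
  · simpa [x.2.2] using h x.1 x.2.1

end Sval

lemma sqrt_mul_le_of_mul_sq_le {a x y : ℝ} (hx : 0 ≤ x) (hy : 0 ≤ y) (h : a * x ^ 2 ≤ y ^ 2) :
    √a * x ≤ y :=
  calc √a * x = √(a * x ^ 2) := by rw [Real.sqrt_mul' _ (sq_nonneg x), Real.sqrt_sq hx]
    _ ≤ √(y ^ 2) := Real.sqrt_le_sqrt h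
    _ = y := Real.sqrt_sq hy

section MembershipMatrix

variable {ι κ R : Type*} [DecidableEq κ]

-- When `R` is left to unification, `*` on `membershipMatrix f` can elaborate with the
-- multiplication of `CStarMatrix`; hence the type ascriptions below.
def membershipMatrix [Zero R] [One R] (f : ι → κ) : Matrix ι κ R :=
  of fun i k => if f i = k then 1 else 0

@[simp]
lemma membershipMatrix_apply [Zero R] [One R] (f : ι → κ) (i : ι) (k : κ) :
    (membershipMatrix f : Matrix ι κ R) i k = if f i = k then 1 else 0 :=
  rfl

lemma membershipMatrix_mulVec [Fintype κ] [NonAssocSemiring R] (f : ι → κ) (v : κ → R) :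
    (membershipMatrix f : Matrix ι κ R) *ᵥ v = v ∘ f := by
  ext i
  simp [mulVec, dotProduct]

lemma transpose_membershipMatrix_mul_self [Fintype ι] [NonAssocSemiring R] (f : ι → κ) :
    (membershipMatrix f : Matrix ι κ R)ᵀ * (membershipMatrix f : Matrix ι κ R) =
      diagonal fun k => (#{i | f i = k} : R) := by
  ext k l
  rw [Matrix.mul_apply, diagonal_apply]
  simp only [transpose_apply, membershipMatrix_apply, mul_ite, mul_one, mul_zero]
  split_ifs with hkl
  · subst hkl
    simp only [← ite_and, and_self, Finset.sum_boole]
  · refine Finset.sum_eq_zero fun i _ => ?_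
    split_ifs with hl hk
    · exact absurd (hk.symm.trans hl) hkl
    all_goals rfl

lemma IsMembership.exists_eq_membershipMatrix {n K : ℕ} {Z : Matrix (Fin n) (Fin K) ℝ}
    (hZ : IsMembership Z) : ∃ f : Fin n → Fin K, Z = membershipMatrix f := by
  choose f hf hf_unique using hZ.2
  refine ⟨f, Matrix.ext fun i k => ?_⟩
  rcases hZ.1 i k with h | h
  · have hk : f i ≠ k := by
      rintro rfl
      simp [hf i] at h
    simp [h, hk]
  · obtain rfl := hf_unique i k h
    simp [hf i]

lemma commCard_membershipMatrix {n K : ℕ} (f : Fin n → Fin K) (k : Fin K) :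
    commCard (membershipMatrix f) k = #{i | f i = k} := by
  simp [commCard]

end MembershipMatrix

section Euclidean

variable {ι κ : Type*} [Fintype κ] [DecidableEq κ] (f : ι → κ)

@[simp]
lemma toEuclideanLin_membershipMatrix_apply (c : EuclideanSpace ℝ κ) (i : ι) :
    toEuclideanLin (membershipMatrix f : Matrix ι κ ℝ) c i = c (f i) := by
  simp [toLpLin_apply, membershipMatrix_mulVec]

lemma norm_sq_toEuclideanLin_membershipMatrix [Fintype ι] (c : EuclideanSpace ℝ κ) :
    ‖toEuclideanLin (membershipMatrix f : Matrix ι κ ℝ) c‖ ^ 2 =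
      ∑ k, #{i | f i = k} * c k ^ 2 := by
  simp_rw [EuclideanSpace.real_norm_sq_eq, toEuclideanLin_membershipMatrix_apply,
    ← Finset.sum_fiberwise' univ f fun k => c k ^ 2]
  simp

lemma toEuclideanLin_transpose_membershipMatrix_apply [Fintype ι] [DecidableEq ι]
    (c : EuclideanSpace ℝ κ) (k : κ) :
    toEuclideanLin (membershipMatrix f : Matrix ι κ ℝ)ᵀ
      (toEuclideanLin (membershipMatrix f : Matrix ι κ ℝ) c) k = #{i | f i = k} * c k := by
  rw [← LinearMap.comp_apply, ← toLpLin_mul_same, transpose_membershipMatrix_mul_self]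
  simp [toLpLin_apply, mulVec_diagonal]

lemma injective_toEuclideanLin_membershipMatrix (hf : Function.Surjective f) :
    Function.Injective (toEuclideanLin (membershipMatrix f : Matrix ι κ ℝ)) := by
  intro c d h
  ext k
  obtain ⟨i, rfl⟩ := hf k
  simpa using congr($h i)

lemma sqrt_mul_norm_le_norm_toEuclideanLin_membershipMatrix [Fintype ι] {a : ℝ}
    (ha : ∀ k, a ≤ #{i | f i = k}) (c : EuclideanSpace ℝ κ) :
    √a * ‖c‖ ≤ ‖toEuclideanLin (membershipMatrix f : Matrix ι κ ℝ) c‖ := by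
  refine sqrt_mul_le_of_mul_sq_le (norm_nonneg _) (norm_nonneg _) ?_
  rw [EuclideanSpace.real_norm_sq_eq, norm_sq_toEuclideanLin_membershipMatrix, Finset.mul_sum]
  exact Finset.sum_le_sum fun k _ => mul_le_mul_of_nonneg_right (ha k) (sq_nonneg _)

lemma sqrt_mul_norm_toEuclideanLin_membershipMatrix_le_norm_transpose [Fintype ι] [DecidableEq ι]
    {a : ℝ} (ha : ∀ k, a ≤ #{i | f i = k}) (c : EuclideanSpace ℝ κ) :
    √a * ‖toEuclideanLin (membershipMatrix f : Matrix ι κ ℝ) c‖ ≤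
      ‖toEuclideanLin (membershipMatrix f : Matrix ι κ ℝ)ᵀ
        (toEuclideanLin (membershipMatrix f : Matrix ι κ ℝ) c)‖ := by
  refine sqrt_mul_le_of_mul_sq_le (norm_nonneg _) (norm_nonneg _) ?_
  simp_rw [norm_sq_toEuclideanLin_membershipMatrix, EuclideanSpace.real_norm_sq_eq,
    toEuclideanLin_transpose_membershipMatrix_apply, Finset.mul_sum]
  refine Finset.sum_le_sum fun k _ => ?_
  calc a * (#{i | f i = k} * c k ^ 2) ≤ #{i | f i = k} * (#{i | f i = k} * c k ^ 2) := by
        gcongr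
        exact ha k
    _ = (#{i | f i = k} * c k) ^ 2 := by ring

end Euclidean

lemma mul_sval_mul_norm_le_norm_toEuclideanLin_conj_membershipMatrix {ι : Type*} [Fintype ι]
    [DecidableEq ι] {K : ℕ} (f : ι → Fin K) (P : Matrix (Fin K) (Fin K) ℝ) {a : ℝ} (ha₀ : 0 ≤ a)
    (ha : ∀ k, a ≤ #{i | f i = k}) (c : EuclideanSpace ℝ (Fin K)) :
    let Z : Matrix ι (Fin K) ℝ := membershipMatrix f
    a * sval P K * ‖toEuclideanLin Z c‖ ≤ ‖toEuclideanLin (Z * P * Zᵀ) (toEuclideanLin Z c)‖ := by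
  intro Z
  have hsval := sval_nonneg P K
  calc a * sval P K * ‖toEuclideanLin Z c‖
      = √a * (sval P K * (√a * ‖toEuclideanLin Z c‖)) := by
        linear_combination (-(sval P K * ‖toEuclideanLin Z c‖)) * Real.mul_self_sqrt ha₀
    _ ≤ √a * (sval P K * ‖toEuclideanLin Zᵀ (toEuclideanLin Z c)‖) := by
        gcongr
        exact sqrt_mul_norm_toEuclideanLin_membershipMatrix_le_norm_transpose f ha c
    _ ≤ √a * ‖toEuclideanLin P (toEuclideanLin Zᵀ (toEuclideanLin Z c))‖ := by
        gcongr
        exact sval_mul_norm_le P _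
    _ ≤ ‖toEuclideanLin Z (toEuclideanLin P (toEuclideanLin Zᵀ (toEuclideanLin Z c)))‖ :=
        sqrt_mul_norm_le_norm_toEuclideanLin_membershipMatrix f ha _
    _ = ‖toEuclideanLin (Z * P * Zᵀ) (toEuclideanLin Z c)‖ := by
        rw [toLpLin_mul_same 2, toLpLin_mul_same 2]
        rfl

theorem sval_membership_conjugation_general {n K : ℕ} (Z : Matrix (Fin n) (Fin K) ℝ)
    (Pm : Matrix (Fin K) (Fin K) ℝ) (nmin : ℕ)
    (hZ : IsMembership Z)
    (hmin : ∀ k, nmin ≤ commCard Z k) (hpos : 0 < nmin) :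
    (nmin : ℝ) * sval Pm K ≤ sval (Z * Pm * Z.transpose) K := by
  obtain ⟨f, rfl⟩ := hZ.exists_eq_membershipMatrix
  simp only [commCard_membershipMatrix] at hmin
  rcases K.eq_zero_or_pos with rfl | hK
  · simp [sval_zero_right]
  have hf : Function.Surjective f := fun k => by
    simpa [Finset.Nonempty] using Finset.card_pos.mp (hpos.trans_le (hmin k))
  set Z := toEuclideanLin (membershipMatrix f : Matrix (Fin n) (Fin K) ℝ)
  refine le_sval_of_forall_mul_norm_le _ (V := LinearMap.range Z) ?_ hK ?_
  · rw [LinearMap.finrank_range_of_inj (injective_toEuclideanLin_membershipMatrix f hf),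
      finrank_euclideanSpace_fin]
  rintro _ ⟨c, rfl⟩
  exact mul_sval_mul_norm_le_norm_toEuclideanLin_conj_membershipMatrix f Pm (Nat.cast_nonneg _)
    (fun k => mod_cast hmin k) c

theorem sval_membership_conjugation {n K : ℕ} (Z : Matrix (Fin n) (Fin K) ℝ)
    (Pm : Matrix (Fin K) (Fin K) ℝ) (nmin : ℕ)
    (hZ : IsMembership Z) (hsym : Pm.IsSymm)
    (hmin : ∀ k, nmin ≤ commCard Z k) (hpos : 0 < nmin) :
    (nmin : ℝ) * sval Pm K ≤ sval (Z * Pm * Z.transpose) K :=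
  sval_membership_conjugation_general Z Pm nmin hZ hmin hpos
end

section
/- Let Y be a centered Bernoulli random variable with parameter p ∈ (0,1), p ≠ 1/2, i.e. Y = 1−p with probability p and Y = −p with probability 1−p. Then the squared sub-Gaussian (ψ₂) norm of Y equals (1−2p)/(2 log((1−p)/p)). -/
/-- The moment generating function `E[exp(lam * Y)]` of the centered Bernoulli
random variable `Y` taking value `1 - p` with probability `p` and `-p` with
probability `1 - p`. -/
noncomputable def bernMGF (p lam : ℝ) : ℝ :=
  p * Real.exp (lam * (1 - p)) + (1 - p) * Real.exp (-(lam * p))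

/-- The squared optimal sub-Gaussian (ψ₂) constant of the centered Bernoulli
variable with parameter `p`: the least `s ≥ 0` such that
`E[exp(lam Y)] ≤ exp(s lam² / 2)` for all `lam`. -/
noncomputable def psi2sq (p : ℝ) : ℝ :=
  sInf {s : ℝ | 0 ≤ s ∧ ∀ lam : ℝ, bernMGF p lam ≤ Real.exp (s * lam ^ 2 / 2)}

/-!
Put `ℓ = log ((1 - p) / p)` and `c = (1 - 2p) / (2ℓ)`. After factoring out `exp (λ (1 - 2p) / 2)`
the moment generating function becomes `cosh ((λ - ℓ) / 2) / cosh (ℓ / 2)`, while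
`c λ² / 2 - λ (1 - 2p) / 2 = (c / 2) ((λ - ℓ)² - ℓ²)`. With `y = (λ - ℓ) / 2`, `s = ℓ / 2` and
`tanh s = 1 - 2p`, the bound `E[exp (λY)] ≤ exp (c λ² / 2)` becomes
`log cosh y ≤ log cosh s + tanh s / (2s) * (y² - s²)`, the tangent line at `s²` of the concave
function `u ↦ log cosh √u`; concavity amounts to `tanh x / x` decreasing on `(0, ∞)`.
Equality holds at `y = s`, i.e. at `λ = 2ℓ ≠ 0`, so `c` cannot be lowered.
-/

open Real Set

theorem hasDerivAt_tanh_div_self {x : ℝ} (hx : x ≠ 0) :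
    HasDerivAt (fun y => tanh y / y) ((x - sinh x * cosh x) / (x * cosh x) ^ 2) x := by
  have hf : (fun y => tanh y / y) = fun y => sinh y / (y * cosh y) := by
    funext y
    rw [tanh_eq_sinh_div_cosh, div_div, mul_comm]
  rw [hf]
  refine ((hasDerivAt_sinh x).div ((hasDerivAt_id' x).mul (hasDerivAt_cosh x))
    (mul_ne_zero hx (cosh_pos x).ne')).congr_deriv ?_
  simp only [Pi.mul_apply]
  field_simp
  linear_combination x * cosh_sq x

theorem antitoneOn_tanh_div_self : AntitoneOn (fun x => tanh x / x) (Ioi 0) := by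
  refine antitoneOn_of_hasDerivWithinAt_nonpos (convex_Ioi 0)
    (fun x hx => (hasDerivAt_tanh_div_self (ne_of_gt hx)).continuousAt.continuousWithinAt)
    (fun x hx => (hasDerivAt_tanh_div_self (ne_of_gt (interior_subset hx))).hasDerivWithinAt)
    (fun x hx => ?_)
  rw [interior_Ioi] at hx
  have hsinh : x ≤ sinh x := self_le_sinh_iff.mpr hx.le
  have : sinh x ≤ sinh x * cosh x :=
    le_mul_of_one_le_right (sinh_nonneg_iff.mpr hx.le) (one_le_cosh x)
  exact div_nonpos_of_nonpos_of_nonneg (by linarith) (sq_nonneg _)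

theorem log_cosh_le_of_pos {s : ℝ} (hs : 0 < s) (y : ℝ) :
    log (cosh y) ≤ log (cosh s) + tanh s / (2 * s) * (y ^ 2 - s ^ 2) := by
  set k := tanh s / (2 * s)
  set H : ℝ → ℝ := fun x => k * x ^ 2 - log (cosh x)
  have hH (x : ℝ) : HasDerivAt H (x * (tanh s / s - tanh x / x)) x := by
    refine (((hasDerivAt_pow 2 x).const_mul k).sub
      ((hasDerivAt_cosh x).log (cosh_pos x).ne')).congr_deriv ?_
    rcases eq_or_ne x 0 with rfl | hx
    · simp
    · simp only [k, tanh_eq_sinh_div_cosh]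
      field_simp
      ring
  have hcont : Continuous H := continuous_iff_continuousAt.mpr fun x => (hH x).continuousAt
  have hanti : AntitoneOn H (Icc 0 s) := by
    refine antitoneOn_of_hasDerivWithinAt_nonpos (convex_Icc 0 s) hcont.continuousOn
      (fun x _ => (hH x).hasDerivWithinAt) fun x hx => ?_
    rw [interior_Icc] at hx
    exact mul_nonpos_of_nonneg_of_nonpos hx.1.le
      (sub_nonpos.mpr (antitoneOn_tanh_div_self hx.1 hs hx.2.le))
  have hmono : MonotoneOn H (Ici s) := by
    refine monotoneOn_of_hasDerivWithinAt_nonneg (convex_Ici s) hcont.continuousOn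
      (fun x _ => (hH x).hasDerivWithinAt) fun x hx => ?_
    rw [interior_Ici] at hx
    have hx0 : 0 < x := hs.trans hx
    exact mul_nonneg hx0.le (sub_nonneg.mpr (antitoneOn_tanh_div_self hs hx0 hx.le))
  suffices H s ≤ H |y| by
    simp only [H, sq_abs, cosh_abs] at this
    linarith
  rcases le_total |y| s with h | h
  · exact hanti ⟨abs_nonneg y, h⟩ ⟨hs.le, le_rfl⟩ h
  · exact hmono self_mem_Ici h h

theorem log_cosh_le {s : ℝ} (hs : s ≠ 0) (y : ℝ) :
    log (cosh y) ≤ log (cosh s) + tanh s / (2 * s) * (y ^ 2 - s ^ 2) := by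
  rcases hs.lt_or_gt with hs | hs
  · have h := log_cosh_le_of_pos (neg_pos.mpr hs) y
    rwa [cosh_neg, tanh_neg, neg_sq, mul_neg, neg_div_neg_eq] at h
  · exact log_cosh_le_of_pos hs y

theorem tanh_half_log {x : ℝ} (hx : 0 < x) : tanh (log x / 2) = (x - 1) / (x + 1) := by
  have hr : exp (log x / 2) ^ 2 = x := by rw [exp_half, sq_sqrt (exp_pos _).le, exp_log hx]
  have hr0 := (exp_pos (log x / 2)).ne'
  rw [tanh_eq_sinh_div_cosh, sinh_eq, cosh_eq, exp_neg]
  field_simp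
  linear_combination (2 : ℝ) * hr

theorem log_one_sub_div_self_ne_zero {p : ℝ} (hp : p ∈ Ioo (0 : ℝ) 1) (hhalf : p ≠ 1 / 2) :
    log ((1 - p) / p) ≠ 0 := by
  obtain ⟨hp0, hp1⟩ := hp
  refine log_ne_zero_of_pos_of_ne_one (div_pos (by linarith) hp0) fun h => hhalf ?_
  rw [div_eq_one_iff_eq hp0.ne'] at h
  linarith

theorem one_sub_two_mul_div_log_nonneg {p : ℝ} (hp : p ∈ Ioo (0 : ℝ) 1) :
    0 ≤ (1 - 2 * p) / (2 * log ((1 - p) / p)) := by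
  obtain ⟨hp0, hp1⟩ := hp
  rcases le_total p (1 / 2) with h | h
  · refine div_nonneg (by linarith) (mul_nonneg zero_le_two (log_nonneg ?_))
    rw [le_div_iff₀ hp0]
    linarith
  · refine div_nonneg_of_nonpos (by linarith)
      (mul_nonpos_of_nonneg_of_nonpos zero_le_two (log_nonpos (by positivity) ?_))
    rw [div_le_one hp0]
    linarith

theorem bernMGF_eq_cosh {p : ℝ} (hp : p ∈ Ioo (0 : ℝ) 1) (lam : ℝ) :
    bernMGF p lam = exp (lam * (1 - 2 * p) / 2) *
      (cosh ((lam - log ((1 - p) / p)) / 2) / cosh (log ((1 - p) / p) / 2)) := by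
  obtain ⟨hp0, hp1⟩ := hp
  set ℓ := log ((1 - p) / p)
  set a := exp (lam / 2)
  set r := exp (ℓ / 2) with hr_def
  have hr : p * r ^ 2 = 1 - p := by
    rw [hr_def, exp_half, sq_sqrt (exp_pos _).le, exp_log (div_pos (by linarith) hp0)]
    field_simp
  have ha := (exp_pos (lam / 2)).ne'
  have hr0 := (exp_pos (ℓ / 2)).ne'
  have e1 : exp (lam * (1 - p)) = exp (lam * (1 - 2 * p) / 2) * a := by
    rw [← exp_add]; congr 1; ring
  have e2 : exp (-(lam * p)) = exp (lam * (1 - 2 * p) / 2) / a := by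
    rw [← exp_sub]; congr 1; ring
  have e3 : exp ((lam - ℓ) / 2) = a / r := by
    rw [← exp_sub]; congr 1; ring
  have e4 : exp (-((lam - ℓ) / 2)) = r / a := by
    rw [← exp_sub]; congr 1; ring
  rw [bernMGF, cosh_eq, cosh_eq, e1, e2, e3, e4, exp_neg, ← hr_def]
  field_simp
  rw [div_eq_div_iff ha (mul_ne_zero ha hr0)]
  linear_combination a * r * (a ^ 2 - 1) * hr

theorem bernMGF_le_exp {p : ℝ} (hp : p ∈ Ioo (0 : ℝ) 1) (hhalf : p ≠ 1 / 2) (lam : ℝ) :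
    bernMGF p lam ≤ exp ((1 - 2 * p) / (2 * log ((1 - p) / p)) * lam ^ 2 / 2) := by
  set ℓ := log ((1 - p) / p)
  have hℓ : ℓ ≠ 0 := log_one_sub_div_self_ne_zero hp hhalf
  have htanh : tanh (ℓ / 2) = 1 - 2 * p := by
    rw [tanh_half_log (div_pos (by linarith [hp.2]) hp.1)]
    field_simp [hp.1.ne']
    ring
  have hcosh : cosh ((lam - ℓ) / 2) / cosh (ℓ / 2) ≤
      exp ((1 - 2 * p) / (2 * (ℓ / 2)) * (((lam - ℓ) / 2) ^ 2 - (ℓ / 2) ^ 2)) := by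
    have h := log_cosh_le (div_ne_zero hℓ two_ne_zero) ((lam - ℓ) / 2)
    rw [htanh] at h
    rw [← log_le_iff_le_exp (div_pos (cosh_pos _) (cosh_pos _)),
      log_div (cosh_pos _).ne' (cosh_pos _).ne']
    linarith
  calc bernMGF p lam
      ≤ exp (lam * (1 - 2 * p) / 2) *
          exp ((1 - 2 * p) / (2 * (ℓ / 2)) * (((lam - ℓ) / 2) ^ 2 - (ℓ / 2) ^ 2)) := by
        rw [bernMGF_eq_cosh hp]
        exact mul_le_mul_of_nonneg_left hcosh (exp_pos _).le
    _ = exp ((1 - 2 * p) / (2 * ℓ) * lam ^ 2 / 2) := by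
        rw [← exp_add]
        congr 1
        field_simp
        ring

theorem bernMGF_two_mul_log {p : ℝ} (hp : p ∈ Ioo (0 : ℝ) 1) (hhalf : p ≠ 1 / 2) :
    bernMGF p (2 * log ((1 - p) / p)) =
      exp ((1 - 2 * p) / (2 * log ((1 - p) / p)) * (2 * log ((1 - p) / p)) ^ 2 / 2) := by
  have hℓ := log_one_sub_div_self_ne_zero hp hhalf
  rw [bernMGF_eq_cosh hp, two_mul, add_sub_cancel_right, div_self (cosh_pos _).ne', mul_one]
  congr 1
  field_simp

theorem psi2sq_eq_of_le_of_eq {p c lam₀ : ℝ} (hc : 0 ≤ c)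
    (hle : ∀ lam, bernMGF p lam ≤ exp (c * lam ^ 2 / 2)) (hlam₀ : lam₀ ≠ 0)
    (heq : bernMGF p lam₀ = exp (c * lam₀ ^ 2 / 2)) : psi2sq p = c := by
  refine IsLeast.csInf_eq ⟨⟨hc, hle⟩, fun s ⟨_, hs⟩ => ?_⟩
  have h := hs lam₀
  rw [heq, exp_le_exp] at h
  nlinarith [sq_pos_of_ne_zero hlam₀]

/-- Buldygin–Kozachenko: for `p ∈ (0,1)`, `p ≠ 1/2`, the squared ψ₂ norm of a
centered Bernoulli(p) random variable equals `(1 - 2p) / (2 log((1-p)/p))`. -/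
theorem psi2sq_centered_bernoulli {p : ℝ} (hp : p ∈ Set.Ioo (0 : ℝ) 1) (hhalf : p ≠ 1 / 2) :
    psi2sq p = (1 - 2 * p) / (2 * Real.log ((1 - p) / p)) :=
  psi2sq_eq_of_le_of_eq (one_sub_two_mul_div_log_nonneg hp) (bernMGF_le_exp hp hhalf)
    (mul_ne_zero two_ne_zero (log_one_sub_div_self_ne_zero hp hhalf)) (bernMGF_two_mul_log hp hhalf)
end

section
/- For a centered Bernoulli random variable Y with parameter p ∈ (0,1), the optimal sub-Gaussian constant satisfies ‖Y‖_{ψ₂} ≤ 1/√(2 |log(min{2p, 2(1−p)})|) whenever p ≠ 1/2. -/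
/-! For `p < 1/2` put `L = -log (2p)`, so that `p = e^{-L}/2`; the case `p > 1/2` follows
from the symmetry `(p, λ) ↦ (1 - p, -λ)`. It suffices to show `E e^{λY} ≤ e^{λ²/(4L)}`.

If `λ ≥ 0` and `λ²/(4L) ≥ log 2`, each of the two terms of the MGF is at most
`e^{λ²/(4L)}/2`: the first because `λ - L ≤ λ²/(4L)`, the second because it is at most
`1 ≤ e^{λ²/(4L)}/2`. Otherwise Bennett's bound `E e^{λY} ≤ exp (p (e^λ - 1 - λ))` reduces the
claim to `2L (e^λ - 1 - λ) ≤ λ² e^L`. For `λ ≤ 2` this follows from `2 (e^λ - 1 - λ) ≤ e λ²`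
and `e L ≤ e^L`; for `λ ≥ 2` from `e^λ - 1 - λ ≤ 2 log 2 · e^{L₀}` with
`L₀ = λ²/(4 log 2) ∈ [1, L]`, using that `e^x / x` increases on `[1, ∞)`. -/

open Real

lemma exp_le_secant {a b θ : ℝ} (h0 : 0 ≤ θ) (h1 : θ ≤ 1) :
    exp ((1 - θ) * a + θ * b) ≤ (1 - θ) * exp a + θ * exp b := by
  simpa using convexOn_exp.2 (Set.mem_univ a) (Set.mem_univ b) (sub_nonneg.2 h1) h0 (by ring)

lemma exp_half_lt : exp (1 / 2) < 1.6488 := by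
  have h : exp (1 / 2) ^ 2 = exp 1 := by rw [← exp_nat_mul]; norm_num
  nlinarith [exp_pos (1 / 2), exp_one_lt_d9]

lemma exp_two_mem_Ioo : exp 2 ∈ Set.Ioo 7.389 7.38906 := by
  have h2 : exp 2 = exp 1 * exp 1 := by rw [← exp_add]; norm_num
  have hlo := mul_lt_mul'' exp_one_gt_d9 exp_one_gt_d9 (by norm_num) (by norm_num)
  have hhi := mul_lt_mul'' exp_one_lt_d9 exp_one_lt_d9 (exp_pos 1).le (exp_pos 1).le
  rw [h2]; constructor <;> norm_num at hlo hhi ⊢ <;> linarith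

lemma exp_one_mul_le_exp (x : ℝ) : exp 1 * x ≤ exp x := by
  have h := add_one_le_exp (x - 1)
  rw [exp_sub, le_div_iff₀ (exp_pos 1)] at h
  linarith

lemma mul_exp_le_mul_exp_of_one_le {a b : ℝ} (ha : 1 ≤ a) (hab : a ≤ b) :
    b * exp a ≤ a * exp b := by
  have h : exp a * (b - a + 1) ≤ exp b := by
    have := add_one_le_exp (b - a)
    rw [exp_sub, le_div_iff₀ (exp_pos a)] at this
    linarith
  calc b * exp a ≤ a * (exp a * (b - a + 1)) := by
        nlinarith [mul_nonneg (mul_nonneg (sub_nonneg.2 ha) (sub_nonneg.2 hab)) (exp_pos a).le]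
    _ ≤ a * exp b := by gcongr

lemma two_mul_exp_sub_one_sub_le {x : ℝ} (hx : x ≤ 2) :
    2 * (exp x - 1 - x) ≤ exp 1 * x ^ 2 := by
  have he := exp_one_gt_d9
  rcases le_or_gt x (-1) with hx1 | hx1
  · nlinarith [exp_le_one_iff.2 (by linarith : x ≤ 0)]
  rcases le_or_gt x 1 with hx2 | hx2
  · have := (abs_le.1 (abs_exp_sub_one_sub_id_le (abs_le.2 ⟨hx1.le, hx2⟩))).2
    nlinarith [sq_nonneg x]
  · have hsec := exp_le_secant (a := 1) (b := 2) (sub_nonneg.2 hx2.le) (by linarith : x - 1 ≤ 1)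
    rw [show (1 - (x - 1)) * 1 + (x - 1) * 2 = x by ring] at hsec
    have h1 := mul_nonneg (sub_nonneg.2 hx2.le) (sub_nonneg.2 exp_two_mem_Ioo.2.le)
    have h2 := mul_nonneg (mul_nonneg (sub_nonneg.2 hx2.le) (by linarith : (0:ℝ) ≤ x + 3))
      (sub_nonneg.2 he.le)
    nlinarith [exp_one_lt_d9, sq_nonneg (x - 1.35)]

lemma exp_sub_one_sub_le_log_two_mul_exp {x : ℝ} (hx : 2 ≤ x) :
    exp x - 1 - x ≤ 2 * log 2 * exp (x ^ 2 / (4 * log 2)) := by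
  have hc := log_two_gt_d9
  have hc' := log_two_lt_d9
  have hc0 : 0 < log 2 := by linarith
  set y := x ^ 2 / (4 * log 2) with hy
  have hxy : 4 * log 2 * y = x ^ 2 := by rw [hy]; field_simp
  -- On `[2, 5/2]` compare the secant of `exp` with its tangent at `2`; beyond `5/2`,
  -- `x - y ≤ 1/4` and `exp (1/4) ≤ 4/3 < 2 log 2`.
  rcases le_or_gt x (5 / 2) with hx1 | hx1
  · have hsec :=
      exp_le_secant (a := 2) (b := 5 / 2) (θ := 2 * (x - 2)) (by linarith) (by linarith)
    rw [show (1 - 2 * (x - 2)) * 2 + 2 * (x - 2) * (5 / 2) = x by ring] at hsec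
    have h52 : exp (5 / 2) < 12.19 := by
      rw [show (5 / 2 : ℝ) = 2 + 1 / 2 by norm_num, exp_add]
      nlinarith [exp_two_mem_Ioo.2, exp_half_lt, exp_pos (1 / 2)]
    have htan : 2 * log 2 * exp y ≥ exp 2 * (x ^ 2 / 2 - 2 * log 2) := by
      have := add_one_le_exp (y - 2)
      rw [exp_sub, le_div_iff₀ (exp_pos 2)] at this
      nlinarith [exp_pos 2]
    nlinarith [exp_two_mem_Ioo.1, exp_two_mem_Ioo.2]
  · have hdiff : x - y ≤ 1 / 4 := by nlinarith
    have hq : exp (1 / 4) ≤ 4 / 3 := by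
      have := exp_bound_div_one_sub_of_interval (x := 1 / 4) (by norm_num) (by norm_num)
      norm_num at this ⊢; linarith
    have : exp x ≤ 4 / 3 * exp y := by
      calc exp x = exp (x - y) * exp y := by rw [← exp_add]; ring_nf
        _ ≤ exp (1 / 4) * exp y := by gcongr
        _ ≤ 4 / 3 * exp y := by gcongr
    nlinarith [exp_pos y]

lemma two_mul_mul_exp_sub_one_sub_le {L t : ℝ} (hL : 0 < L)
    (ht : t ≤ 2 ∨ t ^ 2 ≤ 4 * log 2 * L) :
    2 * L * (exp t - 1 - t) ≤ t ^ 2 * exp L := by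
  rcases le_or_gt t 2 with ht2 | ht2
  · calc 2 * L * (exp t - 1 - t) ≤ L * (exp 1 * t ^ 2) := by
          nlinarith [two_mul_exp_sub_one_sub_le ht2]
      _ ≤ t ^ 2 * exp L := by nlinarith [exp_one_mul_le_exp L, sq_nonneg t]
  · have htL : t ^ 2 ≤ 4 * log 2 * L := ht.resolve_left ht2.not_ge
    have hc := log_two_lt_d9
    have hc0 : 0 < log 2 := log_pos one_lt_two
    set y := t ^ 2 / (4 * log 2) with hy
    have hty : 4 * log 2 * y = t ^ 2 := by rw [hy]; field_simp
    have hy1 : 1 ≤ y := by nlinarith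
    have hyL : y ≤ L := by nlinarith
    calc 2 * L * (exp t - 1 - t) ≤ 2 * L * (2 * log 2 * exp y) := by
          gcongr; exact exp_sub_one_sub_le_log_two_mul_exp ht2.le
      _ = 4 * log 2 * (L * exp y) := by ring
      _ ≤ 4 * log 2 * (y * exp L) := by
          gcongr ?_ * ?_; exact mul_exp_le_mul_exp_of_one_le hy1 hyL
      _ = t ^ 2 * exp L := by rw [← hty]; ring

lemma bernMGF_one_sub_neg (p t : ℝ) : bernMGF (1 - p) (-t) = bernMGF p t := by
  simp only [bernMGF]; ring_nf

lemma bernMGF_le_exp_mul_exp_sub_one_sub (p t : ℝ) :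
    bernMGF p t ≤ exp (p * (exp t - 1 - t)) := by
  calc bernMGF p t = exp (-(t * p)) * (p * (exp t - 1) + 1) := by
        rw [bernMGF, show t * (1 - p) = t + -(t * p) by ring, exp_add]; ring
    _ ≤ exp (-(t * p)) * exp (p * (exp t - 1)) := by gcongr; exact add_one_le_exp _
    _ = exp (p * (exp t - 1 - t)) := by rw [← exp_add]; ring_nf

lemma bernMGF_exp_neg_div_two_le_of_log_two_le {L t : ℝ} (hL : 0 < L) (ht : 0 ≤ t)
    (htL : 4 * log 2 * L ≤ t ^ 2) :
    bernMGF (exp (-L) / 2) t ≤ exp (t ^ 2 / (4 * L)) := by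
  set p := exp (-L) / 2
  have hp0 : 0 < p := by positivity
  have hp1 : p ≤ 1 / 2 := by
    have := exp_le_one_iff.2 (neg_nonpos.2 hL.le); simp only [p]; linarith
  have hamgm : t - L ≤ t ^ 2 / (4 * L) := by
    rw [le_div_iff₀ (by positivity)]; nlinarith [sq_nonneg (t - 2 * L)]
  have hright : p * exp (t * (1 - p)) ≤ exp (t ^ 2 / (4 * L)) / 2 :=
    calc p * exp (t * (1 - p)) ≤ p * exp t := by gcongr; nlinarith
      _ = exp (t - L) / 2 := by simp only [p]; rw [exp_sub, exp_neg]; field_simp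
      _ ≤ exp (t ^ 2 / (4 * L)) / 2 := by gcongr
  have hleft : (1 - p) * exp (-(t * p)) ≤ exp (t ^ 2 / (4 * L)) / 2 := by
    have h1 : exp (-(t * p)) ≤ 1 := exp_le_one_iff.2 (by nlinarith)
    have h2 : log 2 ≤ t ^ 2 / (4 * L) := by rw [le_div_iff₀ (by positivity)]; linarith
    have h3 : 2 ≤ exp (t ^ 2 / (4 * L)) := by
      simpa [exp_log] using exp_le_exp.2 h2
    nlinarith [exp_pos (-(t * p))]
  unfold bernMGF; linarith

theorem bernMGF_exp_neg_div_two_le {L : ℝ} (hL : 0 < L) (t : ℝ) :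
    bernMGF (exp (-L) / 2) t ≤ exp (t ^ 2 / (4 * L)) := by
  by_cases hAMGM : 0 ≤ t ∧ 4 * log 2 * L ≤ t ^ 2
  · exact bernMGF_exp_neg_div_two_le_of_log_two_le hL hAMGM.1 hAMGM.2
  have ht : t ≤ 2 ∨ t ^ 2 ≤ 4 * log 2 * L := by
    by_contra! h; exact hAMGM ⟨by linarith, h.2.le⟩
  refine (bernMGF_le_exp_mul_exp_sub_one_sub _ t).trans (exp_le_exp.2 ?_)
  rw [le_div_iff₀ (by positivity)]
  have h := two_mul_mul_exp_sub_one_sub_le hL ht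
  have hLe : exp (-L) * exp L = 1 := by rw [← exp_add]; simp
  nlinarith [exp_pos (-L)]

lemma bernMGF_le_of_lt_half {q : ℝ} (hq0 : 0 < q) (hq : q < 1 / 2) (t : ℝ) :
    bernMGF q t ≤ exp (t ^ 2 / (4 * |log (2 * q)|)) := by
  have hlog : log (2 * q) < 0 := log_neg (by linarith) (by linarith)
  have hq' : exp (-|log (2 * q)|) / 2 = q := by
    rw [abs_of_neg hlog, neg_neg, exp_log (by linarith)]; ring
  simpa only [hq'] using bernMGF_exp_neg_div_two_le (abs_pos.2 hlog.ne) t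

lemma bernMGF_le_of_ne_half {p : ℝ} (hp : p ∈ Set.Ioo (0 : ℝ) 1) (hhalf : p ≠ 1 / 2)
    (t : ℝ) :
    bernMGF p t ≤ exp (t ^ 2 / (4 * |log (min (2 * p) (2 * (1 - p)))|)) := by
  obtain ⟨hp0, hp1⟩ := hp
  rcases hhalf.lt_or_gt with hlt | hgt
  · rw [min_eq_left (by linarith)]
    exact bernMGF_le_of_lt_half hp0 hlt t
  · rw [min_eq_right (by linarith), ← bernMGF_one_sub_neg, ← neg_sq t]
    exact bernMGF_le_of_lt_half (by linarith) (by linarith) (-t)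

lemma psi2sq_le {p s : ℝ} (hs : 0 ≤ s) (h : ∀ t, bernMGF p t ≤ exp (s * t ^ 2 / 2)) :
    psi2sq p ≤ s :=
  csInf_le ⟨0, fun _ hs' => hs'.1⟩ ⟨hs, h⟩

/-- For `p ∈ (0,1)`, `p ≠ 1/2`, the optimal sub-Gaussian constant of a centered
Bernoulli(p) variable satisfies `‖Y‖_{ψ₂} ≤ 1 / √(2 |log(min{2p, 2(1-p)})|)`. -/
theorem psi2_centered_bernoulli_upper_bound {p : ℝ} (hp : p ∈ Set.Ioo (0 : ℝ) 1)
    (hhalf : p ≠ 1 / 2) :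
    Real.sqrt (psi2sq p) ≤ 1 / Real.sqrt (2 * |Real.log (min (2 * p) (2 * (1 - p)))|) := by
  set M := |log (min (2 * p) (2 * (1 - p)))|
  have hM : 0 ≤ M := abs_nonneg _
  have hpsi : psi2sq p ≤ 1 / (2 * M) := by
    refine psi2sq_le (by positivity) fun t => ?_
    convert bernMGF_le_of_ne_half hp hhalf t using 2
    field_simp; ring
  calc √(psi2sq p) ≤ √(1 / (2 * M)) := sqrt_le_sqrt hpsi
    _ = 1 / √(2 * M) := by rw [sqrt_div' _ (by positivity), sqrt_one]
end
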